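/- arXiv:1311.5394 — 7 statements merged into one kernel-verified Lean document; each statement's English description precedes it below -/
import Mathlib

section
/- Let g be C^2 on an interval I = [a,b] with min over I of max{|g'(θ)|, g''(θ)} ≥ D > 0, and let 0 < δ ≤ D/4. If g is strictly increasing on I with g(I) = [-δ, δ], then |I| ≤ 2√(δ/D). -/
/-!
Let `c` be the first point of `[a, b]` at which `g' ≥ D` (or `c = b`). Before `c` we have
`g' < D`, hence `g'' ≥ D`, so `g' ≥ D (θ - a)` and `g` gains at least `D (c - a)² / 2` on `[a, c]`.
After `c`, `g'` can never drop below `D` again, since it would have to decrease while below `D`,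
where `g'' ≥ D > 0`; so `g` gains at least `D (b - c)` on `[c, b]`. The total gain is `2δ`, and with
`s = c - a`, `t = b - c`, `r = √(δ/D) ≤ 1/2` the constraint `s² / 2 + t ≤ 2 r²` forces `s + t ≤ 2r`.
-/

open Set

theorem le_of_deriv_nonneg_of_lt {f : ℝ → ℝ} {c b D : ℝ} (hf : ContinuousOn f (Icc c b))
    (hdf : DifferentiableOn ℝ f (Ioo c b)) (hc : D ≤ f c)
    (hder : ∀ x ∈ Ioo c b, f x < D → 0 ≤ deriv f x) : ∀ x ∈ Icc c b, D ≤ f x := by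
  intro x hx
  by_contra! hlt
  have hsub : Icc c x ⊆ Icc c b := Icc_subset_Icc_right hx.2
  set S := Icc c x ∩ f ⁻¹' Ici D
  have hS : IsCompact S := isCompact_Icc.of_isClosed_subset
    ((hf.mono hsub).preimage_isClosed_of_isClosed isClosed_Icc isClosed_Ici) inter_subset_left
  -- `v` is the last time before `x` at which `f ≥ D`
  set v := sSup S
  have hvS : v ∈ S := hS.sSup_mem ⟨c, ⟨le_rfl, hx.1⟩, hc⟩
  have hvx : v < x := lt_of_le_of_ne hvS.1.2 fun h => (h ▸ hvS.2 : D ≤ f x).not_gt hlt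
  have hmono : MonotoneOn f (Icc v x) := by
    have hvx_sub : Icc v x ⊆ Icc c b := (Icc_subset_Icc_left hvS.1.1).trans hsub
    refine monotoneOn_of_deriv_nonneg (convex_Icc v x) (hf.mono hvx_sub)
      (hdf.mono ?_) fun y hy => ?_
    · rw [interior_Icc]; exact Ioo_subset_Ioo hvS.1.1 hx.2
    · rw [interior_Icc] at hy
      refine hder y ⟨hvS.1.1.trans_lt hy.1, hy.2.trans_le hx.2⟩ (not_le.mp fun h => ?_)
      exact hy.1.not_ge (le_csSup hS.bddAbove ⟨⟨hvS.1.1.trans hy.1.le, hy.2.le⟩, h⟩)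
  exact (hvS.2.trans (hmono (left_mem_Icc.mpr hvx.le) (right_mem_Icc.mpr hvx.le) hvx.le)).not_gt hlt

theorem exists_split_of_le_deriv_of_lt {f : ℝ → ℝ} {a b D : ℝ} (hab : a ≤ b) (hD : 0 ≤ D)
    (hf : ContinuousOn f (Icc a b)) (hdf : DifferentiableOn ℝ f (Ioo a b))
    (hder : ∀ x ∈ Ioo a b, f x < D → D ≤ deriv f x) :
    ∃ c ∈ Icc a b, (∀ x ∈ Icc a c, f a + D * (x - a) ≤ f x) ∧ ∀ x ∈ Ioo c b, D ≤ f x := by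
  set T := insert b (Icc a b ∩ f ⁻¹' Ici D)
  have hT : IsCompact T := (isCompact_Icc.of_isClosed_subset
    (hf.preimage_isClosed_of_isClosed isClosed_Icc isClosed_Ici) inter_subset_left).insert b
  set c := sInf T
  have hcT : c ∈ T := hT.sInf_mem (insert_nonempty _ _)
  have hcb : c ≤ b := csInf_le hT.bddBelow (mem_insert _ _)
  have hac : a ≤ c := by
    rcases hcT with h | h
    · exact h ▸ hab
    · exact h.1.1
  have hsub : Icc a c ⊆ Icc a b := Icc_subset_Icc_right hcb
  have hbelow : ∀ x ∈ Ico a c, f x < D := fun x hx => not_le.mp fun h =>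
    hx.2.not_ge (csInf_le hT.bddBelow (mem_insert_of_mem _ ⟨⟨hx.1, hx.2.le.trans hcb⟩, h⟩))
  refine ⟨c, ⟨hac, hcb⟩, fun x hx => ?_, fun x hx => ?_⟩
  · have hint : interior (Icc a c) ⊆ Ioo a b := by
      rw [interior_Icc]; exact Ioo_subset_Ioo_right hcb
    have := (convex_Icc a c).mul_sub_le_image_sub_of_le_deriv (hf.mono hsub) (hdf.mono hint)
      (fun y hy => hder y (hint hy) (hbelow y (Ioo_subset_Ico_self (by rwa [interior_Icc] at hy))))
      a (left_mem_Icc.mpr hac) x hx hx.1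
    linarith
  · rcases hcT with h | h
    · exact absurd (hx.1.trans hx.2) (h ▸ lt_irrefl b)
    · have hsub' : Icc c b ⊆ Icc a b := Icc_subset_Icc_left hac
      exact le_of_deriv_nonneg_of_lt (hf.mono hsub') (hdf.mono (Ioo_subset_Ioo_left hac)) h.2
        (fun y hy hy' => hD.trans (hder y ⟨hac.trans_lt hy.1, hy.2⟩ hy')) x (Ioo_subset_Icc_self hx)

theorem mul_sq_div_two_le_sub_of_mul_sub_le_deriv {g : ℝ → ℝ} {a c D : ℝ} (hac : a ≤ c)
    (hg : ContinuousOn g (Icc a c)) (hdg : DifferentiableOn ℝ g (Ioo a c))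
    (hbound : ∀ x ∈ Ioo a c, D * (x - a) ≤ deriv g x) :
    D * (c - a) ^ 2 / 2 ≤ g c - g a := by
  have hderiv : ∀ x ∈ Ioo a c, HasDerivAt (fun x => g x - D / 2 * (x - a) ^ 2)
      (deriv g x - D * (x - a)) x := fun x hx =>
    ((hdg.differentiableAt (isOpen_Ioo.mem_nhds hx)).hasDerivAt.sub
      ((((hasDerivAt_id' x).sub_const a).pow 2).const_mul (D / 2))).congr_deriv (by ring)
  have hmono : MonotoneOn (fun x => g x - D / 2 * (x - a) ^ 2) (Icc a c) := by
    refine monotoneOn_of_deriv_nonneg (convex_Icc a c) (hg.sub (by fun_prop)) ?_ fun x hx => ?_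
    · rw [interior_Icc]; exact fun x hx => (hderiv x hx).differentiableAt.differentiableWithinAt
    · rw [interior_Icc] at hx
      rw [(hderiv x hx).deriv]; linarith [hbound x hx]
  have := hmono (left_mem_Icc.mpr hac) (right_mem_Icc.mpr hac) hac
  simp only [sub_self, zero_pow two_ne_zero, mul_zero, sub_zero] at this
  linarith

theorem add_le_two_mul_sqrt_of_half_sq_add_le {s t D δ : ℝ} (hD : 0 < D) (hδD : δ ≤ D / 4)
    (ht : 0 ≤ t) (h : D * s ^ 2 / 2 + D * t ≤ 2 * δ) :
    s + t ≤ 2 * Real.sqrt (δ / D) := by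
  set r := Real.sqrt (δ / D)
  have hδ : 0 ≤ δ := by nlinarith
  have hDr : D * r ^ 2 = δ := by
    rw [Real.sq_sqrt (div_nonneg hδ hD.le)]; field_simp
  have hr : 0 ≤ r := Real.sqrt_nonneg _
  have hr_half : r ≤ 1 / 2 := by
    have : r ^ 2 ≤ 1 / 4 := by
      rw [← mul_le_mul_iff_right₀ hD]; linarith
    nlinarith
  have hst : s ^ 2 / 2 + t ≤ 2 * r ^ 2 := by
    rw [← hDr] at h; nlinarith
  have hs_le : s ≤ 2 * r := by nlinarith
  -- `2r - s - (2r² - s²/2) = (2r - s)(1 - r - s/2) ≥ 0`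
  nlinarith [mul_nonneg (sub_nonneg.mpr hs_le) (by linarith : (0 : ℝ) ≤ 1 - r - s / 2)]

theorem stmt3_general (a b : ℝ) (g : ℝ → ℝ) (D δ : ℝ)
    (hab : a ≤ b) (hg : ContDiff ℝ 2 g)
    (hD : 0 < D) (hδD : δ ≤ D / 4)
    (hmax : ∀ θ ∈ Set.Icc a b, D ≤ max |deriv g θ| (deriv (deriv g) θ))
    (hpos : ∀ θ ∈ Set.Icc a b, 0 < deriv g θ)
    (hga : g a = -δ) (hgb : g b = δ) :
    b - a ≤ 2 * Real.sqrt (δ / D) := by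
  have hdg : Differentiable ℝ g := hg.differentiable (by norm_num)
  have hdg' : Differentiable ℝ (deriv g) :=
    ((contDiff_succ_iff_deriv (n := 1)).mp hg).2.2.differentiable (by norm_num)
  have hsecond : ∀ θ ∈ Ioo a b, deriv g θ < D → D ≤ deriv (deriv g) θ := fun θ hθ hlt =>
    (le_max_iff.mp (hmax θ (Ioo_subset_Icc_self hθ))).resolve_left
      (by rw [abs_of_pos (hpos θ (Ioo_subset_Icc_self hθ))]; exact not_le.mpr hlt)
  obtain ⟨c, ⟨hac, hcb⟩, hbefore, hafter⟩ := exists_split_of_le_deriv_of_lt hab hD.le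
    hdg'.continuous.continuousOn hdg'.differentiableOn hsecond
  have hquad : D * (c - a) ^ 2 / 2 ≤ g c - g a :=
    mul_sq_div_two_le_sub_of_mul_sub_le_deriv hac hdg.continuous.continuousOn hdg.differentiableOn
      fun x hx => by linarith [hbefore x (Ioo_subset_Icc_self hx), hpos a (left_mem_Icc.mpr hab)]
  have hlin : D * (b - c) ≤ g b - g c :=
    (convex_Icc c b).mul_sub_le_image_sub_of_le_deriv hdg.continuous.continuousOn
      hdg.differentiableOn (fun x hx => hafter x (by rwa [interior_Icc] at hx))
      c (left_mem_Icc.mpr hcb) b (right_mem_Icc.mpr hcb) hcb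
  calc b - a = (c - a) + (b - c) := by ring
    _ ≤ 2 * Real.sqrt (δ / D) :=
      add_le_two_mul_sqrt_of_half_sq_add_le hD hδD (sub_nonneg.mpr hcb) (by linarith)

/-- If `g` is `C²` on `I = [a,b]`, `max{|g'|, g''} ≥ D` on `I`, `0 < δ ≤ D/4`,
`g' > 0` on `I`, and `g(I) = [-δ, δ]`, then `|I| ≤ 2 √(δ/D)`. -/
theorem stmt3 (a b : ℝ) (g : ℝ → ℝ) (D δ : ℝ)
    (hab : a ≤ b) (hg : ContDiff ℝ 2 g)
    (hD : 0 < D) (hδ : 0 < δ) (hδD : δ ≤ D / 4)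
    (hmax : ∀ θ ∈ Set.Icc a b, D ≤ max |deriv g θ| (deriv (deriv g) θ))
    (hpos : ∀ θ ∈ Set.Icc a b, 0 < deriv g θ)
    (hga : g a = -δ) (hgb : g b = δ)
    (himg : g '' Set.Icc a b = Set.Icc (-δ) δ) :
    b - a ≤ 2 * Real.sqrt (δ / D) :=
  stmt3_general a b g D δ hab hg hD hδD hmax hpos hga hgb
end

section
/- Let g be C^2 on an interval I with min over I of max{|g'(θ)|, g''(θ)} ≥ D > 0, 0 < δ ≤ D/4, g' > 0 on I, and g(I) = [-δ,δ]. Then on the subinterval I' = {θ ∈ I : |g(θ)| ≤ (3/4)δ} one has g'(θ) ≥ √(δD/2). -/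
/-!
Let `θ ∈ I'` and `v = g'(θ)`; it suffices to show `v² ≥ δD/2`, which is clear if `v ≥ D`.
If `v < D`, then wherever `g' = v` the hypothesis forces `g'' ≥ D > 0`, so `g'` cannot rise above
`v` when moving left from `θ`; hence `g' ≤ v < D`, and therefore `g'' ≥ D`, on `[a, θ]`.
A second-order Taylor bound at `θ` then gives
`δ/4 ≤ g θ - g a ≤ v L - D L² / 2 ≤ v² / (2D)` with `L = θ - a`.
-/

open Set

theorem image_le_right_of_deriv_pos_of_eq {f f' : ℝ → ℝ} {a t : ℝ}
    (hf : ∀ x, HasDerivAt f (f' x) x) (hpos : ∀ x ∈ Ioc a t, f x = f t → 0 < f' x) :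
    ∀ x ∈ Icc a t, f x ≤ f t := by
  have hrefl : ∀ x, HasDerivAt (fun s => f (-s)) (-f' (-x)) x := fun x => by
    simpa [Function.comp_def] using (hf (-x)).comp x (hasDerivAt_neg x)
  have hfence := image_le_of_deriv_right_lt_deriv_boundary (a := -t) (b := -a)
    (B := fun _ => f t) (fun x _ => (hrefl x).continuousAt.continuousWithinAt)
    (fun x _ => (hrefl x).hasDerivWithinAt) (by simp) (fun _ => hasDerivAt_const _ _)
    fun x hx hx_eq =>
      neg_neg_of_pos (hpos (-x) ⟨by linarith [hx.2], by linarith [hx.1]⟩ hx_eq)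
  intro x hx
  simpa using hfence (x := -x) ⟨by linarith [hx.2], by linarith [hx.1]⟩

theorem sub_le_of_le_deriv2 {f f' f'' : ℝ → ℝ} {a t D : ℝ} (hat : a ≤ t)
    (hf : ∀ x, HasDerivAt f (f' x) x) (hf' : ∀ x, HasDerivAt f' (f'' x) x)
    (hD : ∀ x ∈ Icc a t, D ≤ f'' x) :
    f t - f a ≤ f' t * (t - a) - D * (t - a) ^ 2 / 2 := by
  have hslope : ∀ s ∈ Icc a t, f' s + D * (t - s) ≤ f' t := by
    intro s hs
    have hlin : ∀ x, HasDerivAt (fun x => f' s + D * (x - s)) D x := fun x => by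
      simpa using ((hasDerivAt_id x).sub_const s).const_mul D |>.const_add (f' s)
    simpa using image_le_of_deriv_right_le_deriv_boundary (a := s) (b := t)
      (fun x _ => (hlin x).continuousAt.continuousWithinAt) (fun x _ => (hlin x).hasDerivWithinAt)
      (by simp) (fun x _ => (hf' x).continuousAt.continuousWithinAt)
      (fun x _ => (hf' x).hasDerivWithinAt)
      (fun x hx => hD x ⟨hs.1.trans hx.1, hx.2.le⟩) (right_mem_Icc.2 hs.2)
  have hquad : ∀ x, HasDerivAt
      (fun x => f a + f' t * (x - a) - D / 2 * ((t - a) ^ 2 - (t - x) ^ 2))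
      (f' t - D * (t - x)) x := fun x => by
    have hsq := (((hasDerivAt_id' x).const_sub t).fun_pow 2).const_sub ((t - a) ^ 2)
    have := (((hasDerivAt_id' x).sub_const a).const_mul (f' t)).const_add (f a) |>.fun_sub
      (hsq.const_mul (D / 2))
    exact this.congr_deriv (by norm_num; ring)
  have hfence := image_le_of_deriv_right_le_deriv_boundary (a := a) (b := t)
    (fun x _ => (hf x).continuousAt.continuousWithinAt) (fun x _ => (hf x).hasDerivWithinAt)
    (by simp) (fun x _ => (hquad x).continuousAt.continuousWithinAt)
    (fun x _ => (hquad x).hasDerivWithinAt)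
    (fun x hx => by linarith [hslope x ⟨hx.1, hx.2.le⟩]) (right_mem_Icc.2 hat)
  simp only [sub_self] at hfence
  linarith

/-- If `g` is `C²` on `I`, `max{|g'|, g''} ≥ D` on `I`, `0 < δ ≤ D/4`, `g' > 0` on `I`,
and `g(I) = [-δ, δ]`, then on `I' = {θ ∈ I : |g θ| ≤ (3/4)δ}` one has
`g'(θ) ≥ √(δ D / 2)`. -/
theorem stmt4 (a b : ℝ) (g : ℝ → ℝ) (D δ : ℝ)
    (hab : a ≤ b) (hg : ContDiff ℝ 2 g)
    (hD : 0 < D) (hδ : 0 < δ) (hδD : δ ≤ D / 4)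
    (hmax : ∀ θ ∈ Set.Icc a b, D ≤ max |deriv g θ| (deriv (deriv g) θ))
    (hpos : ∀ θ ∈ Set.Icc a b, 0 < deriv g θ)
    (himg : g '' Set.Icc a b = Set.Icc (-δ) δ) :
    ∀ θ ∈ Set.Icc a b, |g θ| ≤ (3/4) * δ →
      Real.sqrt (δ * D / 2) ≤ deriv g θ := by
  have hg' : ∀ x, HasDerivAt g (deriv g x) x := fun x =>
    (hg.differentiable two_ne_zero x).hasDerivAt
  have hg'' : ∀ x, HasDerivAt (deriv g) (deriv (deriv g) x) x := fun x =>
    ((contDiff_succ_iff_deriv.mp (hg : ContDiff ℝ (1 + 1) g)).2.2.differentiable one_ne_zero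
      x).hasDerivAt
  have hconvex : ∀ s ∈ Icc a b, deriv g s < D → D ≤ deriv (deriv g) s := fun s hs hlt =>
    (le_max_iff.mp (hmax s hs)).resolve_left (by rw [abs_of_pos (hpos s hs)]; exact not_le.2 hlt)
  have hga : g a ≤ -δ := by
    obtain ⟨c, hc, hgc⟩ : -δ ∈ g '' Icc a b := himg ▸ ⟨le_rfl, by linarith⟩
    have hmono : MonotoneOn g (Icc a b) := (strictMonoOn_of_deriv_pos (convex_Icc a b)
      (fun x _ => (hg' x).continuousAt.continuousWithinAt)
      (fun x hx => hpos x (interior_subset hx))).monotoneOn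
    exact hgc ▸ hmono (left_mem_Icc.2 hab) hc hc.1
  intro θ hθ hgθ
  refine Real.sqrt_le_iff.mpr ⟨(hpos θ hθ).le, ?_⟩
  rcases le_or_gt D (deriv g θ) with hDv | hvD
  · nlinarith
  have hle : ∀ s ∈ Icc a θ, deriv g s ≤ deriv g θ := image_le_right_of_deriv_pos_of_eq hg''
    fun s hs hs_eq => hD.trans_le (hconvex s ⟨hs.1.le, hs.2.trans hθ.2⟩ (hs_eq ▸ hvD))
  have htaylor := sub_le_of_le_deriv2 hθ.1 hg' hg'' fun s hs =>
    hconvex s ⟨hs.1, hs.2.trans hθ.2⟩ ((hle s hs).trans_lt hvD)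
  have hgθ_lower := (abs_le.mp hgθ).1
  nlinarith [sq_nonneg (deriv g θ - D * (θ - a))]
end

section
/- Let g be C^2 on an interval I with max{|g'(θ)|, g''(θ)} ≥ D > 0 for all θ ∈ I, and 0 < δ ≤ D/4. If g(I) ⊆ [-δ, δ], then |I| ≤ 4√(δ/D). -/
/-!
Write `f = g'`. Where `|f| < D` the hypothesis forces `f' ≥ D`, so `f` can never decrease
through a level `c` with `|c| < D`: once `f ≥ 0` at a point `ξ`, it stays `≥ 0` to the right,
and it grows at rate `≥ D` until it reaches `D`, after which it stays `≥ D`. Hence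
`f(θ) ≥ D (θ - ξ)` for `θ - ξ ≤ 1`, and `g` gains at least `D (θ - ξ)² / 2` on `[ξ, θ]`.
Since `g` oscillates by at most `2δ`, this bounds the part of `I` right of `ξ` by
`2 √(δ/D)` (the bound `δ ≤ D/4` makes `2 √(δ/D) ≤ 1`). Symmetrically, where `f ≤ 0`
the part of `I` to the left is at most `2 √(δ/D)`. Apply this at an endpoint where `f` has
the right sign, or else split `I` at a zero of `f`.
-/

open Set

section LevelInvariance

variable {f : ℝ → ℝ} {x b D : ℝ}

theorem le_apply_of_abs_lt_of_max_abs_deriv (hf : Differentiable ℝ f)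
    (hmax : ∀ θ ∈ Icc x b, D ≤ max |f θ| (deriv f θ)) {c : ℝ} (hc : |c| < D)
    (hfx : c ≤ f x) : ∀ y ∈ Icc x b, c ≤ f y := by
  intro y hy
  have hD : 0 < D := (abs_nonneg c).trans_lt hc
  have hbarrier := image_le_of_deriv_right_lt_deriv_boundary (f := fun y => -f y)
    (f' := fun y => -deriv f y) (B := fun _ => -c) (B' := fun _ => 0)
    hf.continuous.neg.continuousOn (fun y _ => (hf y).hasDerivAt.neg.hasDerivWithinAt)
    (neg_le_neg hfx) (fun _ => hasDerivAt_const _ _) (fun z hz hfz => by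
      have hfz : f z = c := neg_inj.mp hfz
      have hderiv : D ≤ deriv f z := by
        simpa [hfz, hc.not_ge] using hmax z (Ico_subset_Icc_self hz)
      linarith) hy
  exact neg_le_neg_iff.mp hbarrier

theorem le_apply_of_le_apply_of_max_abs_deriv (hf : Differentiable ℝ f)
    (hmax : ∀ θ ∈ Icc x b, D ≤ max |f θ| (deriv f θ)) (hD : 0 < D) (hfx : D ≤ f x) :
    ∀ y ∈ Icc x b, D ≤ f y := by
  intro y hy
  refine le_of_forall_lt_imp_le_of_dense fun c hc => ?_
  have hc' : |max c 0| < D := by rw [abs_of_nonneg (le_max_right c 0)]; exact max_lt hc hD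
  have hfx' : max c 0 ≤ f x := ((le_abs_self _).trans hc'.le).trans hfx
  exact (le_max_left c 0).trans (le_apply_of_abs_lt_of_max_abs_deriv hf hmax hc' hfx' y hy)

theorem mul_min_le_apply_of_max_abs_deriv (hf : Differentiable ℝ f)
    (hmax : ∀ θ ∈ Icc x b, D ≤ max |f θ| (deriv f θ)) (hD : 0 < D) (hfx : 0 ≤ f x) :
    ∀ y ∈ Icc x b, D * min (y - x) 1 ≤ f y := by
  intro y hy
  by_cases hfy : D ≤ f y
  · calc D * min (y - x) 1 ≤ D * 1 := by gcongr; exact min_le_right _ _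
      _ ≤ f y := by rwa [mul_one]
  have hmax' : ∀ θ ∈ Icc x y, D ≤ max |f θ| (deriv f θ) :=
    fun θ hθ => hmax θ (Icc_subset_Icc_right hy.2 hθ)
  have hlt : ∀ z ∈ Icc x y, f z < D := fun z hz => lt_of_not_ge fun hz' =>
    hfy (le_apply_of_le_apply_of_max_abs_deriv hf
      (fun θ hθ => hmax' θ (Icc_subset_Icc_left hz.1 hθ)) hD hz' y ⟨hz.2, le_rfl⟩)
  have hnonneg : ∀ z ∈ Icc x y, 0 ≤ f z :=
    le_apply_of_abs_lt_of_max_abs_deriv hf hmax' (by rwa [abs_zero]) hfx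
  have hderiv : ∀ z ∈ interior (Icc x y), D ≤ deriv f z := by
    intro z hz
    have hz : z ∈ Icc x y := interior_subset hz
    have habs : |f z| < D := by rw [abs_of_nonneg (hnonneg z hz)]; exact hlt z hz
    simpa [habs.not_ge] using hmax' z hz
  have hslope := (convex_Icc x y).mul_sub_le_image_sub_of_le_deriv hf.continuous.continuousOn
    hf.differentiableOn hderiv x ⟨le_rfl, hy.1⟩ y ⟨hy.1, le_rfl⟩ hy.1
  calc D * min (y - x) 1 ≤ D * (y - x) := by gcongr; exact min_le_left _ _
    _ ≤ f y := by linarith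

end LevelInvariance

theorem add_half_mul_sq_le_of_mul_sub_le_deriv {g : ℝ → ℝ} {x y C : ℝ}
    (hg : Differentiable ℝ g) (hxy : x ≤ y) (h : ∀ z ∈ Icc x y, C * (z - x) ≤ deriv g z) :
    g x + C / 2 * (y - x) ^ 2 ≤ g y := by
  have hquad : ∀ z, HasDerivAt (fun z => g x + C / 2 * (z - x) ^ 2) (C * (z - x)) z := fun z =>
    (((hasDerivAt_id' z).sub_const x).fun_pow 2 |>.const_mul (C / 2)).const_add (g x)
      |>.congr_deriv (by ring)
  exact image_le_of_deriv_right_le_deriv_boundary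
    (fun z _ => (hquad z).continuousAt.continuousWithinAt)
    (fun z _ => (hquad z).hasDerivWithinAt) (by simp) hg.continuous.continuousOn
    (fun z _ => (hg z).hasDerivAt.hasDerivWithinAt) (fun z hz => h z (Ico_subset_Icc_self hz))
    ⟨hxy, le_rfl⟩

section OneSidedBounds

variable {g : ℝ → ℝ} {D δ : ℝ}

theorem sub_le_two_mul_sqrt_of_deriv_nonneg {ξ b : ℝ} (hg : ContDiff ℝ 2 g) (hD : 0 < D)
    (hδD : δ ≤ D / 4) (hmax : ∀ θ ∈ Icc ξ b, D ≤ max |deriv g θ| (deriv (deriv g) θ))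
    (hsmall : ∀ θ ∈ Icc ξ b, |g θ| ≤ δ) (hξ : 0 ≤ deriv g ξ) :
    b - ξ ≤ 2 * √(δ / D) := by
  by_contra! hlong
  set t := √(δ / D)
  have ht : 0 ≤ t := Real.sqrt_nonneg _
  have hξb : ξ ≤ b := by linarith
  have hδ : 0 ≤ δ := (abs_nonneg _).trans (hsmall ξ ⟨le_rfl, hξb⟩)
  have ht_sq : t ^ 2 = δ / D := Real.sq_sqrt (div_nonneg hδ hD.le)
  have ht_le : 2 * t ≤ 1 := by
    have : δ / D ≤ 1 / 4 := by rw [div_le_iff₀ hD]; linarith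
    nlinarith
  have hlower := mul_min_le_apply_of_max_abs_deriv hg.differentiable_deriv_two hmax hD hξ
  set η := ξ + 2 * t
  have hgrowth : g ξ + D / 2 * (η - ξ) ^ 2 ≤ g η :=
    add_half_mul_sq_le_of_mul_sub_le_deriv (hg.differentiable two_ne_zero) (by linarith)
      fun z hz => by
        simpa [min_eq_left (show z - ξ ≤ 1 by linarith [hz.2])] using
          hlower z ⟨hz.1, by linarith [hz.2]⟩
  -- The gain on `[ξ, η]` is exactly `2δ`; the contradiction comes from the strict growth past `η`.
  have hmono : StrictMonoOn g (Icc ξ b) :=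
    strictMonoOn_of_deriv_pos (convex_Icc ξ b) hg.continuous.continuousOn fun z hz => by
      rw [interior_Icc] at hz
      have : 0 < D * min (z - ξ) 1 := mul_pos hD (lt_min (by linarith [hz.1]) one_pos)
      exact this.trans_le (hlower z (Ioo_subset_Icc_self hz))
  have hηb : g η < g b := hmono ⟨by linarith, by linarith⟩ ⟨hξb, le_rfl⟩ (by linarith)
  have hgain : D / 2 * (η - ξ) ^ 2 = 2 * δ := by
    rw [show η - ξ = 2 * t by ring, mul_pow, ht_sq]; field_simp
  have hgξ := (abs_le.mp (hsmall ξ ⟨le_rfl, hξb⟩)).1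
  have hgb := (abs_le.mp (hsmall b ⟨hξb, le_rfl⟩)).2
  linarith

theorem sub_le_two_mul_sqrt_of_deriv_nonpos {a ξ : ℝ} (hg : ContDiff ℝ 2 g) (hD : 0 < D)
    (hδD : δ ≤ D / 4) (hmax : ∀ θ ∈ Icc a ξ, D ≤ max |deriv g θ| (deriv (deriv g) θ))
    (hsmall : ∀ θ ∈ Icc a ξ, |g θ| ≤ δ) (hξ : deriv g ξ ≤ 0) :
    ξ - a ≤ 2 * √(δ / D) := by
  have hderiv : deriv (fun s => g (-s)) = fun s => -deriv g (-s) := funext (deriv_comp_neg g)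
  have hderiv2 : deriv (deriv fun s => g (-s)) = fun s => deriv (deriv g) (-s) := by
    rw [hderiv]
    funext s
    rw [deriv.fun_neg, deriv_comp_neg, neg_neg]
  have := sub_le_two_mul_sqrt_of_deriv_nonneg (g := fun s => g (-s)) (ξ := -ξ) (b := -a)
    (hg.comp contDiff_neg) hD hδD
    (fun θ hθ => by
      rw [hderiv2, hderiv]
      simpa only [abs_neg] using hmax (-θ) (neg_mem_Icc_iff.mpr hθ))
    (fun θ hθ => hsmall (-θ) (neg_mem_Icc_iff.mpr hθ))
    (by simpa [hderiv] using hξ)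
  linarith

end OneSidedBounds

theorem stmt5_general (a b : ℝ) (g : ℝ → ℝ) (D δ : ℝ)
    (hab : a ≤ b) (hg : ContDiff ℝ 2 g)
    (hD : 0 < D) (hδD : δ ≤ D / 4)
    (hmax : ∀ θ ∈ Set.Icc a b, D ≤ max |deriv g θ| (deriv (deriv g) θ))
    (hsmall : ∀ θ ∈ Set.Icc a b, |g θ| ≤ δ) :
    b - a ≤ 4 * Real.sqrt (δ / D) := by
  have hsqrt := Real.sqrt_nonneg (δ / D)
  have right_of (ξ : ℝ) (hξ : ξ ∈ Icc a b) (h : 0 ≤ deriv g ξ) :=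
    sub_le_two_mul_sqrt_of_deriv_nonneg hg hD hδD
      (fun θ hθ => hmax θ (Icc_subset_Icc_left hξ.1 hθ))
      (fun θ hθ => hsmall θ (Icc_subset_Icc_left hξ.1 hθ)) h
  have left_of (ξ : ℝ) (hξ : ξ ∈ Icc a b) (h : deriv g ξ ≤ 0) :=
    sub_le_two_mul_sqrt_of_deriv_nonpos hg hD hδD
      (fun θ hθ => hmax θ (Icc_subset_Icc_right hξ.2 hθ))
      (fun θ hθ => hsmall θ (Icc_subset_Icc_right hξ.2 hθ)) h
  by_cases ha : 0 ≤ deriv g a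
  · linarith [right_of a ⟨le_rfl, hab⟩ ha]
  by_cases hb : deriv g b ≤ 0
  · linarith [left_of b ⟨hab, le_rfl⟩ hb]
  obtain ⟨ξ, hξ, hξ0⟩ := intermediate_value_Icc hab (hg.continuous_deriv one_le_two).continuousOn
    ⟨(not_le.mp ha).le, (not_le.mp hb).le⟩
  linarith [right_of ξ hξ hξ0.ge, left_of ξ hξ hξ0.le]

/-- If `g` is `C²` on `I`, `max{|g'|, g''} ≥ D > 0` on `I`, `0 < δ ≤ D/4` and
`g(I) ⊆ [-δ, δ]`, then `|I| ≤ 4 √(δ/D)`. -/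
theorem stmt5 (a b : ℝ) (g : ℝ → ℝ) (D δ : ℝ)
    (hab : a ≤ b) (hg : ContDiff ℝ 2 g)
    (hD : 0 < D) (hδ : 0 < δ) (hδD : δ ≤ D / 4)
    (hmax : ∀ θ ∈ Set.Icc a b, D ≤ max |deriv g θ| (deriv (deriv g) θ))
    (hsmall : ∀ θ ∈ Set.Icc a b, |g θ| ≤ δ) :
    b - a ≤ 4 * Real.sqrt (δ / D) :=
  stmt5_general a b g D δ hab hg hD hδD hmax hsmall
end

section
/- Let ω be Diophantine with constants κ, τ. Let J^1, J^2 ⊂ 𝕋 be disjoint intervals each of length ≤ ε, and suppose there is an integer ν ∈ [1, N], N = ⌊(κ/(2ε))^{1/τ}⌋, with J^1 ∩ (J^2 - νω) ≠ ∅. Set I = J^1 ∪ (J^2 - νω). Then (J^1 ∪ J^2) ∩ (I + mω) = ∅ for all m ∈ [-N+ν, N] with m ∉ {0, ν}; moreover I ∩ J^2 = ∅ and (I + νω) ∩ J^1 = ∅. -/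
/-!
Let `x₀ ∈ J¹` be congruent mod 1 to a point of `J² - νω`. Then, mod 1, `J¹` and `I` lie within `ε`
of `x₀` and `J²` lies within `ε` of `x₀ + νω`, so each of the sets to be separated lies within `ε`
of `x₀ + sω` for some integer `s`, and the two centres of every pair differ by `qω` with
`0 < |q| ≤ N`. The Diophantine condition with `|q| ≤ N ≤ (κ/(2ε))^(1/τ)` puts `qω` at distance
more than `κ/|q|^τ ≥ 2ε` from every integer, which separates the two `ε`-neighbourhoods.
-/

/-- Two subsets of the circle, represented by sets of reals, are disjoint mod 1
if no point of one is congruent mod 1 to a point of the other. -/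
def DisjointMod1 (A B : Set ℝ) : Prop :=
  ∀ x ∈ A, ∀ y ∈ B, ∀ p : ℤ, x ≠ y + p

def NearMod1 (c ε : ℝ) (A : Set ℝ) : Prop :=
  ∀ u ∈ A, ∃ k : ℤ, |u - c - k| ≤ ε

section DisjointMod1

variable {A B C : Set ℝ}

theorem DisjointMod1.symm (h : DisjointMod1 A B) : DisjointMod1 B A := by
  intro y hy x hx p hyx
  exact h x hx y hy (-p) (by push_cast; linarith)

theorem DisjointMod1.union_left (hA : DisjointMod1 A C) (hB : DisjointMod1 B C) :
    DisjointMod1 (A ∪ B) C := by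
  rintro x (hx | hx)
  exacts [hA x hx, hB x hx]

end DisjointMod1

namespace NearMod1

variable {c ε : ℝ} {A B : Set ℝ}

theorem of_mem_Icc {a b : ℝ} (hc : c ∈ Set.Icc a b) (hab : b - a ≤ ε) :
    NearMod1 c ε (Set.Icc a b) := by
  intro u hu
  refine ⟨0, abs_le.mpr ⟨?_, ?_⟩⟩ <;> push_cast <;> linarith [hu.1, hu.2, hc.1, hc.2]

theorem add_int (h : NearMod1 c ε A) (p : ℤ) : NearMod1 (c + p) ε A := by
  intro u hu
  obtain ⟨k, hk⟩ := h u hu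
  exact ⟨k - p, by push_cast; rwa [show u - (c + p) - (k - p) = u - c - k by ring]⟩

theorem union (hA : NearMod1 c ε A) (hB : NearMod1 c ε B) : NearMod1 c ε (A ∪ B) := by
  rintro u (hu | hu)
  exacts [hA u hu, hB u hu]

theorem image_add (h : NearMod1 c ε A) (t : ℝ) :
    NearMod1 (c + t) ε ((fun x => x + t) '' A) := by
  rintro _ ⟨u, hu, rfl⟩
  obtain ⟨k, hk⟩ := h u hu
  exact ⟨k, by rwa [show u + t - (c + t) - k = u - c - k by ring]⟩

theorem image_sub (h : NearMod1 c ε A) (t : ℝ) :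
    NearMod1 (c - t) ε ((fun y => y - t) '' A) := by
  rintro _ ⟨u, hu, rfl⟩
  obtain ⟨k, hk⟩ := h u hu
  exact ⟨k, by rwa [show u - t - (c - t) - k = u - c - k by ring]⟩

theorem disjointMod1 {θ : ℝ} (hθ : ∀ p : ℤ, 2 * ε < |θ - p|)
    (hA : NearMod1 c ε A) (hB : NearMod1 (c + θ) ε B) : DisjointMod1 A B := by
  intro x hx y hy p hxy
  obtain ⟨k, hk⟩ := hA x hx
  obtain ⟨l, hl⟩ := hB y hy
  have hθ' := hθ (k - l - p)
  push_cast at hθ'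
  rw [show θ - (k - l - p) = (x - c - k) - (y - (c + θ) - l) by rw [hxy]; ring] at hθ'
  linarith [abs_sub (x - c - k) (y - (c + θ) - l)]

end NearMod1

theorem abs_intCast_rpow_le_of_le_floor {c τ : ℝ} (hc : 0 ≤ c) (hτ : 0 < τ) {q : ℤ}
    (hq : |q| ≤ ⌊c ^ (1 / τ)⌋) : |(q : ℝ)| ^ τ ≤ c := by
  have hq' : |(q : ℝ)| ≤ c ^ (1 / τ) := by
    rw [← Int.cast_abs]
    exact (Int.cast_le.mpr hq).trans (Int.floor_le _)
  calc |(q : ℝ)| ^ τ ≤ (c ^ (1 / τ)) ^ τ := Real.rpow_le_rpow (abs_nonneg _) hq' hτ.le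
    _ = c := by rw [one_div, Real.rpow_inv_rpow hc hτ.ne']

theorem two_mul_lt_abs_sub_intCast_of_diophantine {ω κ τ ε : ℝ}
    (hκ : 0 < κ) (hτ : 0 < τ) (hε : 0 < ε)
    (hdio : ∀ q : ℤ, q ≠ 0 → ∀ p : ℤ, κ / |(q:ℝ)| ^ τ < |(q:ℝ) * ω - p|)
    {q : ℤ} (hq0 : q ≠ 0) (hqN : |q| ≤ ⌊(κ / (2 * ε)) ^ (1 / τ)⌋) (p : ℤ) :
    2 * ε < |(q : ℝ) * ω - p| := by
  have hpow : 0 < |(q : ℝ)| ^ τ :=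
    Real.rpow_pos_of_pos (abs_pos.mpr (Int.cast_ne_zero.mpr hq0)) τ
  have hle := abs_intCast_rpow_le_of_le_floor (by positivity) hτ hqN
  have : 2 * ε ≤ κ / |(q : ℝ)| ^ τ := by
    rw [le_div_iff₀ hpow]
    rw [le_div_iff₀ (by positivity)] at hle
    linarith
  exact this.trans_lt (hdio q hq0 p)

theorem stmt7_general (ω κ τ ε a₁ b₁ a₂ b₂ : ℝ)
    (hκ : 0 < κ) (hτ : 1 ≤ τ) (hε : 0 < ε)
    (hdio : ∀ q : ℤ, q ≠ 0 → ∀ p : ℤ, κ / |(q:ℝ)| ^ τ < |(q:ℝ) * ω - p|)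
    (hlen₁ : b₁ - a₁ ≤ ε) (hlen₂ : b₂ - a₂ ≤ ε)
    (ν : ℤ) (hν1 : 1 ≤ ν) (hνN : ν ≤ ⌊(κ / (2*ε)) ^ (1/τ)⌋)
    (hmeet : ¬ DisjointMod1 (Set.Icc a₁ b₁)
      ((fun y => y - (ν:ℝ) * ω) '' Set.Icc a₂ b₂)) :
    (∀ m : ℤ, -⌊(κ / (2*ε)) ^ (1/τ)⌋ + ν ≤ m → m ≤ ⌊(κ / (2*ε)) ^ (1/τ)⌋ →
      m ≠ 0 → m ≠ ν →
      DisjointMod1 (Set.Icc a₁ b₁ ∪ Set.Icc a₂ b₂)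
        ((fun x => x + (m:ℝ) * ω) ''
          (Set.Icc a₁ b₁ ∪ (fun y => y - (ν:ℝ) * ω) '' Set.Icc a₂ b₂))) ∧
    DisjointMod1 (Set.Icc a₁ b₁ ∪ (fun y => y - (ν:ℝ) * ω) '' Set.Icc a₂ b₂)
      (Set.Icc a₂ b₂) ∧
    DisjointMod1 ((fun x => x + (ν:ℝ) * ω) ''
        (Set.Icc a₁ b₁ ∪ (fun y => y - (ν:ℝ) * ω) '' Set.Icc a₂ b₂))
      (Set.Icc a₁ b₁) := by
  set N := ⌊(κ / (2*ε)) ^ (1/τ)⌋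
  have hsep : ∀ q : ℤ, q ≠ 0 → |q| ≤ N → ∀ p : ℤ, 2 * ε < |(q : ℝ) * ω - p| :=
    fun q => two_mul_lt_abs_sub_intCast_of_diophantine hκ (by linarith) hε hdio
  simp only [DisjointMod1, not_forall, not_not] at hmeet
  obtain ⟨x₀, hx₀, _, ⟨y₀, hy₀, rfl⟩, p₀, hx₀y₀⟩ := hmeet
  have hJ₁ : NearMod1 x₀ ε (Set.Icc a₁ b₁) := .of_mem_Icc hx₀ hlen₁
  have hJ₂ : NearMod1 (x₀ + ν * ω) ε (Set.Icc a₂ b₂) := by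
    convert (NearMod1.of_mem_Icc hy₀ hlen₂).add_int p₀ using 1
    linarith
  have hI : NearMod1 x₀ ε (Set.Icc a₁ b₁ ∪ (fun y => y - (ν:ℝ) * ω) '' Set.Icc a₂ b₂) :=
    hJ₁.union (by simpa using hJ₂.image_sub (ν * ω))
  refine ⟨fun m hm₁ hm₂ hm0 hmν => ?_, ?_, ?_⟩
  · refine DisjointMod1.union_left
      (hJ₁.disjointMod1 (hsep m hm0 (abs_le.mpr ⟨by omega, hm₂⟩)) (hI.image_add _)) ?_
    refine hJ₂.disjointMod1 (θ := ((m - ν : ℤ) : ℝ) * ω)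
      (hsep _ (sub_ne_zero.mpr hmν) (abs_le.mpr ⟨by omega, by omega⟩)) ?_
    convert hI.image_add (m * ω) using 1
    push_cast
    ring
  · exact (hJ₂.disjointMod1 (θ := ((-ν : ℤ) : ℝ) * ω)
      (hsep _ (by omega) (by rw [abs_neg, abs_le]; omega)) (by simpa using hI)).symm
  · exact (hJ₁.disjointMod1 (hsep ν (by omega) (abs_le.mpr ⟨by omega, hνN⟩))
      (hI.image_add _)).symm

/-- Resonant intervals: if `J¹, J²` are disjoint intervals of length `≤ ε` and
`J¹ ∩ (J² - νω) ≠ ∅` for some `ν ∈ [1, N]`, `N = ⌊(κ/(2ε))^(1/τ)⌋`, then for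
`I = J¹ ∪ (J² - νω)` one has `(J¹ ∪ J²) ∩ (I + mω) = ∅` for all
`m ∈ [-N+ν, N] \ {0, ν}`, and moreover `I ∩ J² = ∅` and `(I + νω) ∩ J¹ = ∅`. -/
theorem stmt7 (ω κ τ ε a₁ b₁ a₂ b₂ : ℝ)
    (hκ : 0 < κ) (hτ : 1 ≤ τ) (hε : 0 < ε)
    (hdio : ∀ q : ℤ, q ≠ 0 → ∀ p : ℤ, κ / |(q:ℝ)| ^ τ < |(q:ℝ) * ω - p|)
    (hlen₁ : b₁ - a₁ ≤ ε) (hlen₂ : b₂ - a₂ ≤ ε)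
    (hdisj : DisjointMod1 (Set.Icc a₁ b₁) (Set.Icc a₂ b₂))
    (ν : ℤ) (hν1 : 1 ≤ ν) (hνN : ν ≤ ⌊(κ / (2*ε)) ^ (1/τ)⌋)
    (hmeet : ¬ DisjointMod1 (Set.Icc a₁ b₁)
      ((fun y => y - (ν:ℝ) * ω) '' Set.Icc a₂ b₂)) :
    (∀ m : ℤ, -⌊(κ / (2*ε)) ^ (1/τ)⌋ + ν ≤ m → m ≤ ⌊(κ / (2*ε)) ^ (1/τ)⌋ →
      m ≠ 0 → m ≠ ν →
      DisjointMod1 (Set.Icc a₁ b₁ ∪ Set.Icc a₂ b₂)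
        ((fun x => x + (m:ℝ) * ω) ''
          (Set.Icc a₁ b₁ ∪ (fun y => y - (ν:ℝ) * ω) '' Set.Icc a₂ b₂))) ∧
    DisjointMod1 (Set.Icc a₁ b₁ ∪ (fun y => y - (ν:ℝ) * ω) '' Set.Icc a₂ b₂)
      (Set.Icc a₂ b₂) ∧
    DisjointMod1 ((fun x => x + (ν:ℝ) * ω) ''
        (Set.Icc a₁ b₁ ∪ (fun y => y - (ν:ℝ) * ω) '' Set.Icc a₂ b₂))
      (Set.Icc a₁ b₁) :=
  stmt7_general ω κ τ ε a₁ b₁ a₂ b₂ hκ hτ hε hdio hlen₁ hlen₂ ν hν1 hνN hmeet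
end

section
/- Let (r_k) be a sequence in ℝ ∪ {∞} of iterates r_{k+1} = v_k - 1/r_k with |v_k| ≤ C for all k (C ≥ 1, λ ≥ 2C). If |r_j| < λ^{-2} for some index j, then |r_j r_{j+1}| = |r_j v_j - 1| ≥ 1 - Cλ^{-2} > 1/2. Consequently, for any k with |r_k| ≥ λ^{-2}, the product r_0 r_1 ⋯ r_k can be written as ρ_0 ⋯ ρ_l where each ρ_i is either a single factor r_j with |r_j| ≥ λ^{-2}, or a pair r_j r_{j+1} with |r_j| < λ^{-2}, and in all cases |ρ_i| ≥ λ^{-2}. -/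
/-!
If `|r_j|` is tiny then `r_j r_{j+1} = r_j v_j - 1` is close to `-1`, and `|r_{j+1}| ≥ |r_j|⁻¹ - C`
is huge, so small factors never occur twice in a row. Scanning `r_0, …, r_k` from the end, each
small factor can therefore be grouped with its (large) successor, and every resulting block has
absolute value at least `λ⁻²`.
-/

open Finset Function

section Blocks

variable {M : Type*} [CommMonoid M] (r : ℕ → M) (p : ℕ → Prop)

def IsBlock (k : ℕ) (a : M) : Prop :=
  (∃ j ≤ k, a = r j ∧ ¬ p j) ∨ (∃ j < k, a = r j * r (j + 1) ∧ p j)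

variable {r p}

theorem IsBlock.mono {k k' : ℕ} {a : M} (h : IsBlock r p k a) (hk : k ≤ k') :
    IsBlock r p k' a := by
  rcases h with ⟨j, hj, ha, hpj⟩ | ⟨j, hj, ha, hpj⟩
  · exact .inl ⟨j, hj.trans hk, ha, hpj⟩
  · exact .inr ⟨j, hj.trans_le hk, ha, hpj⟩

theorem prod_range_succ_update (ρ : ℕ → M) (l : ℕ) (a : M) :
    ∏ i ∈ range (l + 2), update ρ (l + 1) a i = (∏ i ∈ range (l + 1), ρ i) * a := by
  rw [prod_range_succ, prod_update_of_notMem (by simp), update_self]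

theorem exists_isBlock_prod_eq (hp : ∀ j, p j → ¬ p (j + 1)) (k : ℕ) (hk : ¬ p k) :
    ∃ (l : ℕ) (ρ : ℕ → M), ∏ i ∈ range (l + 1), ρ i = ∏ j ∈ range (k + 1), r j ∧
      ∀ i ≤ l, IsBlock r p k (ρ i) := by
  induction k using Nat.strong_induction_on with
  | _ k ih =>
  have extend : ∀ m < k, ¬ p m → ∀ a, IsBlock r p k a →
      a * ∏ j ∈ range (m + 1), r j = ∏ j ∈ range (k + 1), r j →
      ∃ (l : ℕ) (ρ : ℕ → M), ∏ i ∈ range (l + 1), ρ i = ∏ j ∈ range (k + 1), r j ∧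
        ∀ i ≤ l, IsBlock r p k (ρ i) := by
    intro m hmk hm a ha hprod
    obtain ⟨l, ρ, hρ, hblock⟩ := ih m hmk hm
    refine ⟨l + 1, update ρ (l + 1) a, ?_, fun i hi => ?_⟩
    · rw [prod_range_succ_update, hρ, mul_comm, hprod]
    · rcases hi.lt_or_eq with hi | rfl
      · rw [update_of_ne hi.ne]
        exact (hblock i (Nat.le_of_lt_succ hi)).mono hmk.le
      · rwa [update_self]
  rcases k with _ | m
  · exact ⟨0, fun _ => r 0, rfl, fun _ _ => .inl ⟨0, le_rfl, rfl, hk⟩⟩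
  by_cases hm : p m
  · rcases m with _ | n
    · refine ⟨0, fun _ => r 0 * r 1, ?_, fun _ _ => .inr ⟨0, zero_lt_one, rfl, hm⟩⟩
      simp [prod_range_succ]
    · have hn : ¬ p n := fun hn => hp n hn hm
      refine extend n (by omega) hn _ (.inr ⟨n + 1, by omega, rfl, hm⟩) ?_
      simp only [prod_range_succ]
      ac_rfl
  · exact extend m (by omega) hm _ (.inl ⟨m + 1, le_rfl, rfl, hk⟩)
      (by rw [prod_range_succ _ (m + 1), mul_comm])

end Blocks

theorem one_sub_mul_le_abs_mul_sub_one {x v ε C : ℝ} (hx : |x| ≤ ε) (hv : |v| ≤ C) :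
    1 - C * ε ≤ |x * v - 1| := by
  have hxv : |x * v| ≤ ε * C := by
    rw [abs_mul]
    exact mul_le_mul hx hv (abs_nonneg v) ((abs_nonneg x).trans hx)
  have := abs_sub_abs_le_abs_sub 1 (x * v)
  rw [abs_one, abs_sub_comm] at this
  linarith

theorem inv_sub_le_abs_sub_one_div {x v ε C : ℝ} (hx0 : x ≠ 0) (hx : |x| ≤ ε) (hv : |v| ≤ C) :
    ε⁻¹ - C ≤ |v - 1 / x| := by
  have hinv : ε⁻¹ ≤ |1 / x| := by
    rw [abs_div, abs_one, one_div]
    exact inv_anti₀ (abs_pos.mpr hx0) hx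
  have := abs_sub_abs_le_abs_sub (1 / x) v
  rw [abs_sub_comm] at this
  linarith

theorem inv_le_half {lam : ℝ} (hlam : 2 ≤ lam) : lam⁻¹ ≤ 1 / 2 := by
  rw [one_div]
  exact inv_anti₀ two_pos hlam

theorem inv_sq_le_quarter {lam : ℝ} (hlam : 2 ≤ lam) : lam⁻¹ ^ 2 ≤ 1 / 4 :=
  calc lam⁻¹ ^ 2 ≤ (1 / 2) ^ 2 :=
        pow_le_pow_left₀ (inv_nonneg.mpr (by linarith)) (inv_le_half hlam) 2
    _ = 1 / 4 := by norm_num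

theorem mul_inv_sq_le_quarter {lam C : ℝ} (hlam : 2 ≤ lam) (hlamC : 2 * C ≤ lam) :
    C * lam⁻¹ ^ 2 ≤ 1 / 4 :=
  calc C * lam⁻¹ ^ 2 ≤ lam / 2 * lam⁻¹ ^ 2 := by gcongr; linarith
    _ = lam⁻¹ / 2 := by field_simp
    _ ≤ 1 / 4 := by linarith [inv_le_half hlam]

theorem stmt8_general (lam C : ℝ) (v r : ℕ → ℝ)
    (hlam : 2 ≤ lam) (hlamC : 2 * C ≤ lam)
    (hv : ∀ k, |v k| ≤ C)
    (hrne : ∀ k, r k ≠ 0)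
    (hrec : ∀ k, r (k+1) = v k - 1 / r k) :
    (∀ j, |r j| < lam⁻¹ ^ 2 →
      |r j * r (j+1)| = |r j * v j - 1| ∧
      1 - C * lam⁻¹ ^ 2 ≤ |r j * r (j+1)| ∧
      (1:ℝ)/2 < 1 - C * lam⁻¹ ^ 2) ∧
    (∀ k, lam⁻¹ ^ 2 ≤ |r k| →
      ∃ (l : ℕ) (ρ : ℕ → ℝ),
        (∏ i ∈ Finset.range (l+1), ρ i) = (∏ j ∈ Finset.range (k+1), r j) ∧
        ∀ i ≤ l, lam⁻¹ ^ 2 ≤ |ρ i| ∧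
          ((∃ j ≤ k, ρ i = r j ∧ lam⁻¹ ^ 2 ≤ |r j|) ∨
           (∃ j < k, ρ i = r j * r (j+1) ∧ |r j| < lam⁻¹ ^ 2))) := by
  have hCs := mul_inv_sq_le_quarter hlam hlamC
  have hs := inv_sq_le_quarter hlam
  have hpair : ∀ j, r j * r (j + 1) = r j * v j - 1 := fun j => by
    rw [hrec j, mul_sub, mul_one_div_cancel (hrne j)]
  have hpair_ge : ∀ j, |r j| < lam⁻¹ ^ 2 → 1 - C * lam⁻¹ ^ 2 ≤ |r j * r (j + 1)| := fun j hj =>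
    hpair j ▸ one_sub_mul_le_abs_mul_sub_one hj.le (hv j)
  have hnext : ∀ j, |r j| < lam⁻¹ ^ 2 → ¬ |r (j + 1)| < lam⁻¹ ^ 2 := by
    intro j hj
    have hbig := inv_sub_le_abs_sub_one_div (hrne j) hj.le (hv j)
    rw [← inv_pow, inv_inv] at hbig
    have hgap : lam⁻¹ ^ 2 ≤ lam ^ 2 - C := by nlinarith
    rw [not_lt, hrec j]
    exact hgap.trans hbig
  refine ⟨fun j hj => ⟨by rw [hpair], hpair_ge j hj, by linarith⟩, fun k hk => ?_⟩
  obtain ⟨l, ρ, hprod, hblock⟩ := exists_isBlock_prod_eq (r := r) hnext k hk.not_gt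
  refine ⟨l, ρ, hprod, fun i hi => ?_⟩
  rcases hblock i hi with ⟨j, hj, hρ, hlarge⟩ | ⟨j, hj, hρ, hsmall⟩
  · rw [not_lt] at hlarge
    exact ⟨hρ ▸ hlarge, .inl ⟨j, hj, hρ, hlarge⟩⟩
  · exact ⟨by rw [hρ]; linarith [hpair_ge j hsmall], .inr ⟨j, hj, hρ, hsmall⟩⟩

/-- Pairing of small factors: for iterates `r_{k+1} = v_k - 1/r_k` with
`|v_k| ≤ C`, `C ≥ 1`, `λ ≥ 2C`, if `|r_j| < λ⁻²` then
`|r_j r_{j+1}| = |r_j v_j - 1| ≥ 1 - C λ⁻² > 1/2`; consequently, whenever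
`|r_k| ≥ λ⁻²` the product `r_0 ⋯ r_k` can be written as `ρ_0 ⋯ ρ_l` where each
`ρ_i` is either a single factor `r_j` with `|r_j| ≥ λ⁻²` or a pair
`r_j r_{j+1}` with `|r_j| < λ⁻²`, and in all cases `|ρ_i| ≥ λ⁻²`. -/
theorem stmt8 (lam C : ℝ) (v r : ℕ → ℝ)
    (hlam : 2 ≤ lam) (hC : 1 ≤ C) (hlamC : 2 * C ≤ lam)
    (hv : ∀ k, |v k| ≤ C)
    (hrne : ∀ k, r k ≠ 0)
    (hrec : ∀ k, r (k+1) = v k - 1 / r k) :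
    (∀ j, |r j| < lam⁻¹ ^ 2 →
      |r j * r (j+1)| = |r j * v j - 1| ∧
      1 - C * lam⁻¹ ^ 2 ≤ |r j * r (j+1)| ∧
      (1:ℝ)/2 < 1 - C * lam⁻¹ ^ 2) ∧
    (∀ k, lam⁻¹ ^ 2 ≤ |r k| →
      ∃ (l : ℕ) (ρ : ℕ → ℝ),
        (∏ i ∈ Finset.range (l+1), ρ i) = (∏ j ∈ Finset.range (k+1), r j) ∧
        ∀ i ≤ l, lam⁻¹ ^ 2 ≤ |ρ i| ∧
          ((∃ j ≤ k, ρ i = r j ∧ lam⁻¹ ^ 2 ≤ |r j|) ∨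
           (∃ j < k, ρ i = r j * r (j+1) ∧ |r j| < lam⁻¹ ^ 2))) :=
  stmt8_general lam C v r hlam hlamC hv hrne hrec
end

section
/- Let r_1 ∈ ℝ be given and define r_{j+1} = v_j - 1/r_j; let s_0 ∈ ℝ with s_0 ≠ 0 and s_1 = r_1 - 1/s_0, s_{j+1} = v_j - 1/s_j. Then for all k ≥ 1 (assuming all denominators are nonzero): r_{k+1} - s_{k+1} = ( r_1^2 ⋯ r_k^2 ( s_0 - 1/r_1 - 1/(r_1^2 r_2) - 1/(r_1^2 r_2^2 r_3) - ⋯ - 1/(r_1^2 ⋯ r_{k-1}^2 r_k) ) )^{-1}. -/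
/-!
Write `D_j = r₁²⋯r_j² (s₀ - ∑_{i ≤ j} 1/(r₁²⋯r_{i-1}² r_i))`, so that `D₀ = s₀` and
`D_{j+1} = D_j r_{j+1}² - r_{j+1}`. Both sequences follow the same Möbius map, hence
`r_{j+2} - s_{j+2} = (r_{j+1} - s_{j+1}) / (r_{j+1} s_{j+1})`. If `r_{j+1} - s_{j+1} = 1/D_j`, then
`s_{j+1} = r_{j+1} - 1/D_j` turns the recurrence for `D` into `D_{j+1} = D_j r_{j+1} s_{j+1}`,
which is nonzero and gives `r_{j+2} - s_{j+2} = 1/D_{j+1}`. Induction from `r₁ - s₁ = 1/s₀`.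
-/

open Finset

variable {K : Type*} [Field K]

def sqProd (r : ℕ → K) (j : ℕ) : K := ∏ i ∈ Icc 1 j, r i ^ 2

def shadowDenom (r : ℕ → K) (s₀ : K) (j : ℕ) : K :=
  sqProd r j * (s₀ - ∑ i ∈ Icc 1 j, (sqProd r (i - 1) * r i)⁻¹)

lemma sqProd_ne_zero {r : ℕ → K} {j : ℕ} (hr : ∀ i, 1 ≤ i → i ≤ j → r i ≠ 0) :
    sqProd r j ≠ 0 :=
  prod_ne_zero_iff.mpr fun i hi ↦ pow_ne_zero 2 (hr i (mem_Icc.mp hi).1 (mem_Icc.mp hi).2)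

lemma sqProd_succ (r : ℕ → K) (j : ℕ) : sqProd r (j + 1) = sqProd r j * r (j + 1) ^ 2 :=
  prod_Icc_succ_top (Nat.le_add_left 1 j) _

@[simp]
lemma shadowDenom_zero (r : ℕ → K) (s₀ : K) : shadowDenom r s₀ 0 = s₀ := by
  simp [shadowDenom, sqProd]

lemma shadowDenom_succ (r : ℕ → K) (s₀ : K) {j : ℕ} (hP : sqProd r j ≠ 0) :
    shadowDenom r s₀ (j + 1) = shadowDenom r s₀ j * r (j + 1) ^ 2 - r (j + 1) := by
  have hsum : ∑ i ∈ Icc 1 (j + 1), (sqProd r (i - 1) * r i)⁻¹ =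
      ∑ i ∈ Icc 1 j, (sqProd r (i - 1) * r i)⁻¹ + (sqProd r j * r (j + 1))⁻¹ :=
    sum_Icc_succ_top (Nat.le_add_left 1 j) _
  have hcancel : sqProd r j * r (j + 1) ^ 2 * (sqProd r j * r (j + 1))⁻¹ = r (j + 1) := by
    rw [mul_inv, sq, mul_mul_mul_comm, mul_inv_cancel₀ hP, one_mul, mul_self_mul_inv]
  rw [shadowDenom, shadowDenom, sqProd_succ, hsum, sub_add_eq_sub_sub, mul_sub, hcancel]
  ring

lemma sub_sub_one_div_sub_one_div (v : K) {a b : K} (ha : a ≠ 0) (hb : b ≠ 0) :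
    (v - 1 / a) - (v - 1 / b) = (a - b) / (a * b) := by
  rw [sub_sub_sub_cancel_left, one_div, one_div, inv_sub_inv hb ha, mul_comm b]

lemma shadow_step (v : K) {a b D : K} (ha : a ≠ 0) (hb : b ≠ 0) (hD : D ≠ 0)
    (h : a - b = D⁻¹) : D * a ^ 2 - a ≠ 0 ∧ (v - 1 / a) - (v - 1 / b) = (D * a ^ 2 - a)⁻¹ := by
  have hfactor : D * a ^ 2 - a = D * a * b := by
    rw [show b = a - D⁻¹ by rw [← h]; ring]
    field_simp
  rw [hfactor, sub_sub_one_div_sub_one_div v ha hb, h, div_eq_mul_inv, ← mul_inv, ← mul_assoc]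
  exact ⟨mul_ne_zero (mul_ne_zero hD ha) hb, rfl⟩

theorem stmt10_general (v r s : ℕ → ℝ) (k : ℕ)
    (hrrec : ∀ j, 1 ≤ j → r (j+1) = v j - 1 / r j)
    (hs1 : s 1 = r 1 - 1 / s 0)
    (hsrec : ∀ j, 1 ≤ j → s (j+1) = v j - 1 / s j)
    (hs0 : s 0 ≠ 0)
    (hrne : ∀ j, 1 ≤ j → j ≤ k → r j ≠ 0)
    (hsne : ∀ j, 1 ≤ j → j ≤ k → s j ≠ 0) :
    r (k+1) - s (k+1) =
      ((∏ j ∈ Finset.Icc 1 k, (r j)^2) *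
        (s 0 - ∑ i ∈ Finset.Icc 1 k,
          ((∏ j ∈ Finset.Icc 1 (i-1), (r j)^2) * r i)⁻¹))⁻¹ := by
  suffices key : ∀ j ≤ k,
      shadowDenom r (s 0) j ≠ 0 ∧ r (j + 1) - s (j + 1) = (shadowDenom r (s 0) j)⁻¹ from
    (key k le_rfl).2
  intro j
  induction j with
  | zero => exact fun _ ↦ ⟨by simpa using hs0, by rw [hs1, shadowDenom_zero]; ring⟩
  | succ j ih =>
    intro hj
    obtain ⟨hD, hdiff⟩ := ih (by omega)
    have hP : sqProd r j ≠ 0 := sqProd_ne_zero fun i hi hij ↦ hrne i hi (by omega)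
    rw [shadowDenom_succ r (s 0) hP, hrrec (j + 1) (by omega), hsrec (j + 1) (by omega)]
    exact shadow_step (v (j + 1)) (hrne _ (by omega) hj) (hsne _ (by omega) hj) hD hdiff

/-- Shadowing formula: with `r_{j+1} = v_j - 1/r_j` (j ≥ 1), `s₁ = r₁ - 1/s₀`,
`s_{j+1} = v_j - 1/s_j` (j ≥ 1), one has for `k ≥ 1`:
`r_{k+1} - s_{k+1} = (r₁²⋯r_k² (s₀ - 1/r₁ - 1/(r₁²r₂) - ⋯ - 1/(r₁²⋯r_{k-1}²r_k)))⁻¹`. -/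
theorem stmt10 (v r s : ℕ → ℝ) (k : ℕ) (hk : 1 ≤ k)
    (hrrec : ∀ j, 1 ≤ j → r (j+1) = v j - 1 / r j)
    (hs1 : s 1 = r 1 - 1 / s 0)
    (hsrec : ∀ j, 1 ≤ j → s (j+1) = v j - 1 / s j)
    (hs0 : s 0 ≠ 0)
    (hrne : ∀ j, 1 ≤ j → j ≤ k → r j ≠ 0)
    (hsne : ∀ j, 1 ≤ j → j ≤ k → s j ≠ 0)
    (hden : (∏ j ∈ Finset.Icc 1 k, (r j)^2) *
        (s 0 - ∑ i ∈ Finset.Icc 1 k,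
          ((∏ j ∈ Finset.Icc 1 (i-1), (r j)^2) * r i)⁻¹) ≠ 0) :
    r (k+1) - s (k+1) =
      ((∏ j ∈ Finset.Icc 1 k, (r j)^2) *
        (s 0 - ∑ i ∈ Finset.Icc 1 k,
          ((∏ j ∈ Finset.Icc 1 (i-1), (r j)^2) * r i)⁻¹))⁻¹ :=
  stmt10_general v r s k hrrec hs1 hsrec hs0 hrne hsne
end

section
/- With r_1 = v and r_{k+1}(θ) = v(θ+kω) - 1/r_k(θ): if at some θ we have |r_k(θ)| ≥ λ^{3/4} for all k ∈ [1, l] (l ≥ 1), and ‖v'‖_∞ ≤ C ≤ λ with λ ≥ (4C)^{2}, then |r_k'(θ)| ≤ 2C for all k ∈ [1, l]. -/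
/-!
Differentiating the recursion gives `r_{k+1}'(θ) = v'(θ + kω) + r_k'(θ) / r_k(θ)²`. Since
`λ ≥ 2`, the hypothesis `|r_k(θ)| ≥ λ^{3/4}` gives `r_k(θ)² ≥ λ^{3/2} ≥ 2`, so the bound
`|r_k'| ≤ 2C` propagates by induction: `|r_{k+1}'| ≤ C + 2C / 2 = 2C`.
-/

theorem two_le_sq_of_rpow_le_abs {lam x : ℝ} (hlam : 2 ≤ lam)
    (hx : lam ^ ((3 : ℝ) / 4) ≤ |x|) : 2 ≤ x ^ 2 :=
  calc (2 : ℝ) ≤ lam := hlam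
    _ ≤ lam ^ ((3 : ℝ) / 4 * (2 : ℕ)) := Real.self_le_rpow_of_one_le (by linarith) (by norm_num)
    _ = (lam ^ ((3 : ℝ) / 4)) ^ 2 := Real.rpow_mul_natCast (by linarith) _ _
    _ ≤ |x| ^ 2 := by gcongr
    _ = x ^ 2 := sq_abs x

theorem abs_add_div_sq_le_two_mul {a d x C : ℝ} (ha : |a| ≤ C) (hd : |d| ≤ 2 * C)
    (hx : 2 ≤ x ^ 2) : |a + d / x ^ 2| ≤ 2 * C := by
  have hx0 : 0 < x ^ 2 := by linarith
  have hdx : |d| / x ^ 2 ≤ C := by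
    rw [div_le_iff₀ hx0]
    nlinarith [abs_nonneg d]
  calc |a + d / x ^ 2| ≤ |a| + |d / x ^ 2| := abs_add_le _ _
    _ = |a| + |d| / x ^ 2 := by rw [abs_div, abs_of_pos hx0]
    _ ≤ 2 * C := by linarith

theorem HasDerivAt.comp_add_const_sub_one_div {v f : ℝ → ℝ} {a d c θ : ℝ}
    (hv : HasDerivAt v a (θ + c)) (hf : HasDerivAt f d θ) (hf0 : f θ ≠ 0) :
    HasDerivAt (fun t => v (t + c) - 1 / f t) (a + d / f θ ^ 2) θ := by
  have hshift : HasDerivAt (fun t => v (t + c)) a θ := hv.comp_add_const θ c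
  have hinv : HasDerivAt (fun t => 1 / f t) (-d / f θ ^ 2) θ := by
    simpa only [one_div] using hf.fun_inv hf0
  simpa only [neg_div, sub_neg_eq_add] using hshift.fun_sub hinv

theorem exists_hasDerivAt_iterate_abs_le {v : ℝ → ℝ} {r : ℕ → ℝ → ℝ} {C ω θ : ℝ} {l : ℕ}
    (hv : Differentiable ℝ v) (hv' : ∀ t, |deriv v t| ≤ C)
    (hr1 : ∀ t, r 1 t = v t)
    (hrec : ∀ j, 1 ≤ j → ∀ t, r (j + 1) t = v (t + (j : ℝ) * ω) - 1 / r j t)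
    (hsq : ∀ j, 1 ≤ j → j < l → 2 ≤ r j θ ^ 2) :
    ∀ k, 1 ≤ k → k ≤ l → ∃ d, HasDerivAt (r k) d θ ∧ |d| ≤ 2 * C := by
  intro k hk
  induction k, hk using Nat.le_induction with
  | base =>
    intro _
    refine ⟨deriv v θ, ?_, ?_⟩
    · rw [funext hr1]
      exact (hv θ).hasDerivAt
    · linarith [hv' θ, abs_nonneg (deriv v θ)]
  | succ n hn ih =>
    intro hnl
    obtain ⟨d, hd, hdC⟩ := ih (by omega)
    have hn2 := hsq n hn (by omega)
    have hn0 : r n θ ≠ 0 := fun h => by norm_num [h] at hn2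
    refine ⟨deriv v (θ + n * ω) + d / r n θ ^ 2, ?_, abs_add_div_sq_le_two_mul (hv' _) hdC hn2⟩
    rw [funext (hrec n hn)]
    exact (hv _).hasDerivAt.comp_add_const_sub_one_div hd hn0

theorem stmt12_general (lam C : ℝ) (v : ℝ → ℝ) (ω : ℝ) (r : ℕ → ℝ → ℝ) (θ : ℝ) (l : ℕ)
    (hlam2 : 2 ≤ lam)
    (hv : ContDiff ℝ 1 v) (hv' : ∀ t, |deriv v t| ≤ C)
    (hr1 : ∀ t, r 1 t = v t)
    (hrec : ∀ j, 1 ≤ j → ∀ t, r (j+1) t = v (t + (j:ℝ) * ω) - 1 / r j t)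
    (hbig : ∀ j, 1 ≤ j → j ≤ l → lam ^ ((3:ℝ)/4) ≤ |r j θ|) :
    ∀ k, 1 ≤ k → k ≤ l → |deriv (r k) θ| ≤ 2 * C := by
  intro k hk hkl
  have hsq : ∀ j, 1 ≤ j → j < l → 2 ≤ r j θ ^ 2 := fun j hj hjl =>
    two_le_sq_of_rpow_le_abs hlam2 (hbig j hj hjl.le)
  obtain ⟨d, hd, hdC⟩ :=
    exists_hasDerivAt_iterate_abs_le (hv.differentiable one_ne_zero) hv' hr1 hrec hsq k hk hkl
  rwa [hd.deriv]

/-- If all the iterates `r_1(θ), …, r_l(θ)` are ≥ `λ^(3/4)` in absolute value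
and `‖v'‖_∞ ≤ C ≤ λ` with `λ ≥ (4C)²`, then `|r_k'(θ)| ≤ 2C` for `k ∈ [1,l]`. -/
theorem stmt12 (lam C : ℝ) (v : ℝ → ℝ) (ω : ℝ) (r : ℕ → ℝ → ℝ) (θ : ℝ) (l : ℕ)
    (hl : 1 ≤ l) (hlam2 : 2 ≤ lam) (hC : 0 < C) (hClam : C ≤ lam)
    (hlam : (4*C)^2 ≤ lam)
    (hv : ContDiff ℝ 1 v) (hv' : ∀ t, |deriv v t| ≤ C)
    (hr1 : ∀ t, r 1 t = v t)
    (hrec : ∀ j, 1 ≤ j → ∀ t, r (j+1) t = v (t + (j:ℝ) * ω) - 1 / r j t)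
    (hbig : ∀ j, 1 ≤ j → j ≤ l → lam ^ ((3:ℝ)/4) ≤ |r j θ|) :
    ∀ k, 1 ≤ k → k ≤ l → |deriv (r k) θ| ≤ 2 * C :=
  stmt12_general lam C v ω r θ l hlam2 hv hv' hr1 hrec hbig
end
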